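/- arXiv:2502.19613 — 3 statements merged into one kernel-verified Lean document; each statement's English description precedes it below -/
import Mathlib

section
/- Let A be a nonempty finite type, let p : A → ℝ be a probability mass function with p(a) > 0 for every a ∈ A, let f : A → ℝ, and let η > 0. Set Z = Σ_{a ∈ A} p(a) · exp(f(a)/η). Then for every probability mass function r on A, the KL-regularized objective is bounded by the log-partition value: Σ_{a ∈ A} r(a) · f(a) − η · KL(r‖p) ≤ η · log Z. -/
/-! Writing `q a = p a * exp (f a / η)`, the objective equals `η * ∑ a, r a * log (q a / r a)`.
Applying `log y ≤ y - 1` to `y = q a / (Z * r a)` termwise and summing gives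
`∑ a, r a * log (q a / r a) ≤ log Z` (Gibbs' inequality). -/

open Finset Real

theorem Real.mul_log_div_le_sub {r x : ℝ} (hr : 0 ≤ r) (hx : 0 < x) :
    r * log (x / r) ≤ x - r := by
  rcases hr.eq_or_lt with rfl | hr
  · simpa using hx.le
  · have h := log_le_sub_one_of_pos (div_pos hx hr)
    calc r * log (x / r) ≤ r * (x / r - 1) := mul_le_mul_of_nonneg_left h hr.le
      _ = x - r := by field_simp

theorem Real.sum_mul_log_div_le_log_sum {ι : Type*} {s : Finset ι} {r q : ι → ℝ}
    (hr : ∀ i ∈ s, 0 ≤ r i) (hr_sum : ∑ i ∈ s, r i = 1) (hq : ∀ i ∈ s, 0 < q i) :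
    ∑ i ∈ s, r i * log (q i / r i) ≤ log (∑ i ∈ s, q i) := by
  set Q := ∑ i ∈ s, q i
  have hs : s.Nonempty := nonempty_of_sum_ne_zero (by rw [hr_sum]; exact one_ne_zero)
  have hQ : 0 < Q := sum_pos hq hs
  have hterm : ∀ i ∈ s, r i * log (q i / r i) = r i * log (q i / Q / r i) + r i * log Q := by
    intro i hi
    rcases (hr i hi).eq_or_lt with h0 | hpos
    · simp [← h0]
    · rw [div_right_comm, log_div (div_pos (hq i hi) hpos).ne' hQ.ne']
      ring
  calc ∑ i ∈ s, r i * log (q i / r i)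
      = ∑ i ∈ s, r i * log (q i / Q / r i) + log Q := by
        rw [sum_congr rfl hterm, sum_add_distrib, ← sum_mul, hr_sum, one_mul]
    _ ≤ ∑ i ∈ s, (q i / Q - r i) + log Q := by
        gcongr with i hi
        exact mul_log_div_le_sub (hr i hi) (div_pos (hq i hi) hQ)
    _ = log Q := by rw [sum_sub_distrib, ← sum_div, div_self hQ.ne', hr_sum, sub_self, zero_add]

theorem kl_regularized_objective_le_log_partition_general {A : Type*} [Fintype A]
    (p : A → ℝ) (hp_pos : ∀ a, 0 < p a)
    (f : A → ℝ) (η : ℝ) (hη : 0 < η)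
    (Z : ℝ) (hZ : Z = ∑ a, p a * Real.exp (f a / η))
    (r : A → ℝ) (hr_nonneg : ∀ a, 0 ≤ r a) (hr_sum : ∑ a, r a = 1) :
    ∑ a, r a * f a - η * (∑ a, r a * Real.log (r a / p a)) ≤ η * Real.log Z := by
  have hterm : ∀ a, r a * f a - η * (r a * log (r a / p a))
      = η * (r a * log (p a * exp (f a / η) / r a)) := by
    intro a
    rcases (hr_nonneg a).eq_or_lt with h0 | hpos
    · simp [← h0]
    · rw [log_div (mul_pos (hp_pos a) (exp_pos _)).ne' hpos.ne', log_mul (hp_pos a).ne'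
        (exp_pos _).ne', log_exp, log_div hpos.ne' (hp_pos a).ne']
      field_simp
      ring
  calc ∑ a, r a * f a - η * ∑ a, r a * log (r a / p a)
      = η * ∑ a, r a * log (p a * exp (f a / η) / r a) := by
        rw [mul_sum, mul_sum, ← sum_sub_distrib]
        exact sum_congr rfl fun a _ => hterm a
    _ ≤ η * log Z := by
        rw [hZ]
        gcongr
        exact sum_mul_log_div_le_log_sum (fun a _ => hr_nonneg a) hr_sum
          fun a _ => mul_pos (hp_pos a) (exp_pos _)

/-- **Log-partition upper bound for the KL-regularized objective.**
For a nonempty finite type `A`, a reference pmf `p` with full support, `f : A → ℝ`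
and `η > 0`, let `Z = ∑ a, p a * exp (f a / η)`.  Then for every pmf `r` on `A`,
`∑ a, r a * f a − η · KL(r‖p) ≤ η · log Z`,
where `KL(r‖p) = ∑ a, r a * log (r a / p a)` (with the convention `0 · log 0 = 0`,
which holds automatically since the `a`-th summand carries the factor `r a`). -/
theorem kl_regularized_objective_le_log_partition {A : Type*} [Fintype A] [Nonempty A]
    (p : A → ℝ) (hp_pos : ∀ a, 0 < p a) (hp_sum : ∑ a, p a = 1)
    (f : A → ℝ) (η : ℝ) (hη : 0 < η)
    (Z : ℝ) (hZ : Z = ∑ a, p a * Real.exp (f a / η))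
    (r : A → ℝ) (hr_nonneg : ∀ a, 0 ≤ r a) (hr_sum : ∑ a, r a = 1) :
    ∑ a, r a * f a - η * (∑ a, r a * Real.log (r a / p a)) ≤ η * Real.log Z :=
  kl_regularized_objective_le_log_partition_general p hp_pos f η hη Z hZ r hr_nonneg hr_sum
end

section
/- Consider a finite-horizon KL-regularized MDP with horizon H ≥ 1, finite nonempty state space S, finite nonempty action space A, deterministic transitions t_h : S → A → S for h = 1,…,H−1, terminal reward u : S → A → ℝ, reference policies π_ref^h : S → A → ℝ (each π_ref^h(s) a probability mass function on A with full support), and η > 0. Define backward: Q_H(s,a) = u(s,a); V_h(s) = η · log(Σ_{a ∈ A} π_ref^h(s)(a) · exp(Q_h(s,a)/η)); Q_h(s,a) = V_{h+1}(t_h(s,a)) for h < H; and the Gibbs policies π*_h(s)(a) = π_ref^h(s)(a) · exp((Q_h(s,a) − V_h(s))/η). Then for every trajectory, i.e. every sequence of states s_1,…,s_H and actions a_1,…,a_H with s_{h+1} = t_h(s_h, a_h) for h = 1,…,H−1, the log policy ratios telescope: η · Σ_{h=1}^{H} log(π*_h(s_h)(a_h) / π_ref^h(s_h)(a_h)) =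 u(s_H, a_H) − V_1(s_1). -/
/-!
The Gibbs form of `π*_h` gives, at every step, `η · log (π*_h / π_ref^h) = Q_h − V_h`, and along a
trajectory the recursion `Q_h(s_h, a_h) = V_{h+1}(s_{h+1})` turns `Q_h` into the next value.
Extending the values past the horizon by `u(s_H, a_H)`, the sum of the log ratios is a
telescoping sum of consecutive value differences.
-/

open Finset

theorem mul_log_gibbs_div_ref {η p q v : ℝ} (hη : η ≠ 0) (hp : p ≠ 0) :
    η * Real.log (p * Real.exp ((q - v) / η) / p) = q - v := by
  rw [mul_div_cancel_left₀ _ hp, Real.log_exp, mul_div_cancel₀ _ hη]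

section Trajectory

variable {S A : Type*} (H : ℕ) (V : ℕ → S → ℝ) (u : S → A → ℝ) (s : ℕ → S)
  (a : ℕ → A)

noncomputable def trajValue (h : ℕ) : ℝ :=
  if h ≤ H then V h (s h) else u (s H) (a H)

theorem trajValue_of_le {h : ℕ} (hh : h ≤ H) : trajValue H V u s a h = V h (s h) :=
  if_pos hh

theorem trajValue_succ_horizon : trajValue H V u s a (H + 1) = u (s H) (a H) :=
  if_neg (Nat.not_succ_le_self H)

theorem Q_eq_trajValue_succ (t : ℕ → S → A → S) (Q : ℕ → S → A → ℝ)
    (hQH : ∀ s a, Q H s a = u s a)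
    (hQ : ∀ h, 1 ≤ h → h < H → ∀ s a, Q h s a = V (h + 1) (t h s a))
    (htraj : ∀ h, 1 ≤ h → h < H → s (h + 1) = t h (s h) (a h))
    {h : ℕ} (h1 : 1 ≤ h) (hH : h ≤ H) :
    Q h (s h) (a h) = trajValue H V u s a (h + 1) := by
  rcases hH.eq_or_lt with rfl | hlt
  · rw [hQH, trajValue_succ_horizon]
  · rw [hQ h h1 hlt, ← htraj h h1 hlt, trajValue_of_le H V u s a hlt]

end Trajectory

theorem kl_regularized_mdp_log_ratio_telescope_general {S A : Type*}
    (H : ℕ) (hH : 1 ≤ H)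
    (t : ℕ → S → A → S) (u : S → A → ℝ)
    (πref : ℕ → S → A → ℝ)
    (href_pos : ∀ h, 1 ≤ h → h ≤ H → ∀ s a, 0 < πref h s a)
    (η : ℝ) (hη : 0 < η)
    (Q : ℕ → S → A → ℝ) (V : ℕ → S → ℝ)
    (hQH : ∀ s a, Q H s a = u s a)
    (hQ : ∀ h, 1 ≤ h → h < H → ∀ s a, Q h s a = V (h + 1) (t h s a))
    (πstar : ℕ → S → A → ℝ)
    (hπstar : ∀ h, 1 ≤ h → h ≤ H → ∀ s a,
      πstar h s a = πref h s a * Real.exp ((Q h s a - V h s) / η))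
    (s : ℕ → S) (a : ℕ → A)
    (htraj : ∀ h, 1 ≤ h → h < H → s (h + 1) = t h (s h) (a h)) :
    η * ∑ h ∈ Finset.Icc 1 H,
        Real.log (πstar h (s h) (a h) / πref h (s h) (a h))
      = u (s H) (a H) - V 1 (s 1) := by
  calc η * ∑ h ∈ Icc 1 H, Real.log (πstar h (s h) (a h) / πref h (s h) (a h))
      = ∑ h ∈ Icc 1 H, (trajValue H V u s a (h + 1) - trajValue H V u s a h) := by
        rw [mul_sum]
        refine sum_congr rfl fun h hh => ?_
        obtain ⟨h1, h2⟩ := mem_Icc.mp hh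
        rw [hπstar h h1 h2, mul_log_gibbs_div_ref hη.ne' (href_pos h h1 h2 _ _).ne',
          Q_eq_trajValue_succ H V u s a t Q hQH hQ htraj h1 h2, trajValue_of_le H V u s a h2]
    _ = trajValue H V u s a (H + 1) - trajValue H V u s a 1 := sum_Icc_sub hH _
    _ = u (s H) (a H) - V 1 (s 1) := by
        rw [trajValue_succ_horizon, trajValue_of_le H V u s a hH]

/-- **Telescoping of Gibbs log policy ratios along a trajectory.**
In the finite-horizon KL-regularized MDP (horizon `H ≥ 1`, finite nonempty state
space `S` and action space `A`, deterministic transitions `t`, terminal reward `u`,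
reference policies `πref h s` which are pmfs on `A` with full support, `η > 0`),
define backward `Q H s a = u s a`,
`V h s = η * log (∑ a, πref h s a * exp (Q h s a / η))` for `1 ≤ h ≤ H`,
`Q h s a = V (h+1) (t h s a)` for `1 ≤ h < H`, and the Gibbs policies
`πstar h s a = πref h s a * exp ((Q h s a − V h s) / η)`.
Then for every trajectory, i.e. states `s 1, …, s H` and actions `a 1, …, a H`
with `s (h+1) = t h (s h) (a h)` for `1 ≤ h < H`, the log policy ratios telescope:
`η * ∑_{h=1}^{H} log (πstar h (s h) (a h) / πref h (s h) (a h))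
  = u (s H) (a H) − V 1 (s 1)`. -/
theorem kl_regularized_mdp_log_ratio_telescope {S A : Type*} [Fintype S] [Nonempty S]
    [Fintype A] [Nonempty A]
    (H : ℕ) (hH : 1 ≤ H)
    (t : ℕ → S → A → S) (u : S → A → ℝ)
    (πref : ℕ → S → A → ℝ)
    (href_pos : ∀ h, 1 ≤ h → h ≤ H → ∀ s a, 0 < πref h s a)
    (href_sum : ∀ h, 1 ≤ h → h ≤ H → ∀ s, ∑ a, πref h s a = 1)
    (η : ℝ) (hη : 0 < η)
    (Q : ℕ → S → A → ℝ) (V : ℕ → S → ℝ)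
    (hQH : ∀ s a, Q H s a = u s a)
    (hV : ∀ h, 1 ≤ h → h ≤ H → ∀ s,
      V h s = η * Real.log (∑ a, πref h s a * Real.exp (Q h s a / η)))
    (hQ : ∀ h, 1 ≤ h → h < H → ∀ s a, Q h s a = V (h + 1) (t h s a))
    (πstar : ℕ → S → A → ℝ)
    (hπstar : ∀ h, 1 ≤ h → h ≤ H → ∀ s a,
      πstar h s a = πref h s a * Real.exp ((Q h s a - V h s) / η))
    (s : ℕ → S) (a : ℕ → A)
    (htraj : ∀ h, 1 ≤ h → h < H → s (h + 1) = t h (s h) (a h)) :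
    η * ∑ h ∈ Finset.Icc 1 H,
        Real.log (πstar h (s h) (a h) / πref h (s h) (a h))
      = u (s H) (a H) - V 1 (s 1) :=
  kl_regularized_mdp_log_ratio_telescope_general H hH t u πref href_pos η hη Q V hQH hQ πstar hπstar
    s a htraj
end

section
/- Let H ≥ 1, let S and A be nonempty finite types, let t_h : S → A → S for h = 1,…,H−1 be deterministic transitions, let π_ref^h, π_θ^h : S → A → ℝ be policies with π_ref^h(s)(a) > 0 and π_θ^h(s)(a) > 0 for all s, a, and let η > 0. Suppose there exist functions V_h : S → ℝ (h = 1,…,H) and Q_h : S → A → ℝ (h = 1,…,H) satisfying, for all h, s, a: η · log(π_θ^h(s)(a)/π_ref^h(s)(a)) = Q_h(s,a) − V_h(s), and Q_h(s,a) = V_{h+1}(t_h(s,a)) for h = 1,…,H−1. Define the trajectory utility u_θ of a trajectory (s_1, a_1, …, a_H) with s_{h+1} = t_h(s_h, a_h) as u_θ = Q_H(s_H, a_H). Then for any two trajectories τ^w = (s_1, a^w_1, …, a^w_H) and τ^l = (s_1, a^l_1, …, a^l_H) sharing the same initial state s_1 (with respective state sequences s^w_h، s^l_h generated by the transitions), the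 utility difference equals η times the difference of the accumulated log policy ratios: u_θ(τ^w) − u_θ(τ^l) = η · ( Σ_{h=1}^{H} log(π_θ^h(s^w_h)(a^w_h)/π_ref^h(s^w_h)(a^w_h)) − Σ_{h=1}^{H} log(π_θ^h(s^l_h)(a^l_h)/π_ref^h(s^l_h)(a^l_h)) ). -/
/-! Along a trajectory, `η * log (πθ / πref) = Q h - V h` at each step and the Bellman relation
`Q h = V (h + 1) ∘ t h` make the accumulated log ratios telescope to `Q H (s H) (a H) - V 1 (s 1)`.
Two trajectories with a common initial state share the term `V 1 (s 1)`, which cancels in the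
difference. -/

open Finset

theorem eq_add_sum_Icc_sub_of_forall_succ_eq {G : Type*} [AddCommGroup G] {f g : ℕ → G}
    {n : ℕ} (hn : 1 ≤ n) (hfg : ∀ h, 1 ≤ h → h < n → g (h + 1) = f h) :
    f n = g 1 + ∑ h ∈ Icc 1 n, (f h - g h) := by
  induction n, hn using Nat.le_induction with
  | base => simp
  | succ n hn ih =>
    rw [sum_Icc_succ_top (by omega), ← add_assoc,
      ← ih fun h h1 h2 => hfg h h1 (by omega), hfg n hn (by omega)]
    abel

theorem q_eq_value_add_sum_log_ratio {S A : Type*} (H : ℕ) (hH : 1 ≤ H)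
    (t : ℕ → S → A → S) (πref πθ : ℕ → S → A → ℝ) (η : ℝ)
    (V : ℕ → S → ℝ) (Q : ℕ → S → A → ℝ)
    (hlog : ∀ h, 1 ≤ h → h ≤ H → ∀ s a,
      η * Real.log (πθ h s a / πref h s a) = Q h s a - V h s)
    (hQ : ∀ h, 1 ≤ h → h < H → ∀ s a, Q h s a = V (h + 1) (t h s a))
    (s : ℕ → S) (a : ℕ → A) (htraj : ∀ h, 1 ≤ h → h < H → s (h + 1) = t h (s h) (a h)) :
    Q H (s H) (a H)
      = V 1 (s 1) + η * ∑ h ∈ Icc 1 H, Real.log (πθ h (s h) (a h) / πref h (s h) (a h)) := by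
  rw [mul_sum, sum_congr rfl fun h hh => hlog h (mem_Icc.1 hh).1 (mem_Icc.1 hh).2 (s h) (a h)]
  exact eq_add_sum_Icc_sub_of_forall_succ_eq (f := fun h => Q h (s h) (a h))
    (g := fun h => V h (s h)) hH fun h h1 h2 => by rw [htraj h h1 h2, hQ h h1 h2]

theorem mdpo_utility_difference_general {S A : Type*}
    (H : ℕ) (hH : 1 ≤ H)
    (t : ℕ → S → A → S)
    (πref πθ : ℕ → S → A → ℝ)
    (η : ℝ)
    (V : ℕ → S → ℝ) (Q : ℕ → S → A → ℝ)
    (hlog : ∀ h, 1 ≤ h → h ≤ H → ∀ s a,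
      η * Real.log (πθ h s a / πref h s a) = Q h s a - V h s)
    (hQ : ∀ h, 1 ≤ h → h < H → ∀ s a, Q h s a = V (h + 1) (t h s a))
    (sw sl : ℕ → S) (aw al : ℕ → A)
    (hinit : sw 1 = sl 1)
    (htrajw : ∀ h, 1 ≤ h → h < H → sw (h + 1) = t h (sw h) (aw h))
    (htrajl : ∀ h, 1 ≤ h → h < H → sl (h + 1) = t h (sl h) (al h)) :
    Q H (sw H) (aw H) - Q H (sl H) (al H)
      = η * ((∑ h ∈ Finset.Icc 1 H,
            Real.log (πθ h (sw h) (aw h) / πref h (sw h) (aw h)))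
          - ∑ h ∈ Finset.Icc 1 H,
            Real.log (πθ h (sl h) (al h) / πref h (sl h) (al h))) := by
  rw [q_eq_value_add_sum_log_ratio H hH t πref πθ η V Q hlog hQ sw aw htrajw,
    q_eq_value_add_sum_log_ratio H hH t πref πθ η V Q hlog hQ sl al htrajl, hinit]
  ring

/-- **M-DPO utility-difference identity.**
Let `H ≥ 1`, let `S` and `A` be nonempty finite types, let `t h : S → A → S`
(for `1 ≤ h < H`) be deterministic transitions, let `πref h, πθ h : S → A → ℝ`
be policies with `πref h s a > 0` and `πθ h s a > 0` for all `s, a`, and let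
`η > 0`.  Suppose there exist functions `V h : S → ℝ` and `Q h : S → A → ℝ`
(for `1 ≤ h ≤ H`) satisfying
`η * log (πθ h s a / πref h s a) = Q h s a − V h s` for all `1 ≤ h ≤ H`, and
`Q h s a = V (h+1) (t h s a)` for all `1 ≤ h < H`.
The trajectory utility of a trajectory `(s 1, a 1, …, a H)` generated by the
transitions is `uθ = Q H (s H) (a H)`.  Then for any two trajectories
`τʷ = (s 1, aʷ 1, …, aʷ H)` and `τˡ = (s 1, aˡ 1, …, aˡ H)` sharing the same
initial state, the utility difference equals `η` times the difference of the
accumulated log policy ratios. -/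
theorem mdpo_utility_difference {S A : Type*} [Fintype S] [Nonempty S]
    [Fintype A] [Nonempty A]
    (H : ℕ) (hH : 1 ≤ H)
    (t : ℕ → S → A → S)
    (πref πθ : ℕ → S → A → ℝ)
    (href_pos : ∀ h, 1 ≤ h → h ≤ H → ∀ s a, 0 < πref h s a)
    (hθ_pos : ∀ h, 1 ≤ h → h ≤ H → ∀ s a, 0 < πθ h s a)
    (η : ℝ) (hη : 0 < η)
    (V : ℕ → S → ℝ) (Q : ℕ → S → A → ℝ)
    (hlog : ∀ h, 1 ≤ h → h ≤ H → ∀ s a,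
      η * Real.log (πθ h s a / πref h s a) = Q h s a - V h s)
    (hQ : ∀ h, 1 ≤ h → h < H → ∀ s a, Q h s a = V (h + 1) (t h s a))
    (sw sl : ℕ → S) (aw al : ℕ → A)
    (hinit : sw 1 = sl 1)
    (htrajw : ∀ h, 1 ≤ h → h < H → sw (h + 1) = t h (sw h) (aw h))
    (htrajl : ∀ h, 1 ≤ h → h < H → sl (h + 1) = t h (sl h) (al h)) :
    Q H (sw H) (aw H) - Q H (sl H) (al H)
      = η * ((∑ h ∈ Finset.Icc 1 H,
            Real.log (πθ h (sw h) (aw h) / πref h (sw h) (aw h)))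
          - ∑ h ∈ Finset.Icc 1 H,
            Real.log (πθ h (sl h) (al h) / πref h (sl h) (al h))) :=
  mdpo_utility_difference_general H hH t πref πθ η V Q hlog hQ sw sl aw al hinit htrajw htrajl
end
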